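/- Fix x > 0 and, on the state space S := {(n₀, n₁, …, n_J) ∈ ℕ₀^{J+1} : n₀+⋯+n_J = N}, define the product-form weights w(n) := (η₀/x)^{n₀} · ∏_{j=1}^{J} ∏_{i=1}^{n_j} (η_j/ν_j(i)) and the normalisation constant C_x(N) := ∑_{n ∈ S} w(n) (so that π(n) := w(n)/C_x(N) is the steady-state distribution of the SOQN with lost customers and arrival rate x). Let j ∈ {1,…,J} be a node whose service rate is constant, ν_j(i) = ν_j for all i. Then the steady-state probability that node j is empty equals ∑_{n ∈ S, n_j = 0} π(n) = 1 − (η_j/ν_j) · C_x(N−1)/C_x(N) = 1 − λ_eff(x) · η_j/(η₀ · ν_j). In particular, if x is adjusted so that λ_eff(x) = λ_BO, this probability equals 1 − λ_BO · η_j/(η₀ · ν_j), the same as the idle probability of node j in the SOQN with backordering. -/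

import Mathlib

/-!
Grouping the states by `n₀` shows that the total weight of the states with `M` customers is
`C_x(M)`. Removing one customer from node `j` maps the states in which node `j` is busy
bijectively onto the states with `N - 1` customers, and since `ν_j ≡ c` it divides the weight by
`η_j / c`; hence the busy probability is `(η_j / c) C_x(N-1) / C_x(N)`. The recursion
`C_x(N) = C^stb(N) + (η₀/x) C_x(N-1)` turns `λ_eff(x)` into `η₀ C_x(N-1) / C_x(N)`.
-/

open Finset

noncomputable def Cstb (J : ℕ) (η : Fin J → ℝ) (ν : Fin J → ℕ → ℝ) (m : ℕ) : ℝ :=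
  ∑ n ∈ Finset.Nat.antidiagonalTuple J m,
    ∏ j, ∏ i ∈ Finset.range (n j), η j / ν j (i + 1)

noncomputable def lamEff (J N : ℕ) (η0 : ℝ) (η : Fin J → ℝ) (ν : Fin J → ℕ → ℝ)
    (x : ℝ) : ℝ :=
  x * (1 - Cstb J η ν N /
    ∑ n0 ∈ Finset.range (N + 1), (η0 / x) ^ n0 * Cstb J η ν (N - n0))

noncomputable def Cx (J : ℕ) (η0 : ℝ) (η : Fin J → ℝ) (ν : Fin J → ℕ → ℝ)
    (x : ℝ) (L : ℕ) : ℝ :=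
  ∑ n0 ∈ Finset.range (L + 1), (η0 / x) ^ n0 * Cstb J η ν (L - n0)

namespace Finset.Nat

variable {M : Type*} [AddCommMonoid M]

theorem sum_antidiagonalTuple_succ (k n : ℕ) (f : (Fin (k + 1) → ℕ) → M) :
    ∑ x ∈ antidiagonalTuple (k + 1) n, f x =
      ∑ a ∈ range (n + 1), ∑ y ∈ antidiagonalTuple k (n - a), f (Fin.cons a y) := by
  let e := (Fin.consEquiv fun _ : Fin (k + 1) => ℕ).symm
  calc ∑ x ∈ antidiagonalTuple (k + 1) n, f x
      = ∑ p ∈ (antidiagonalTuple (k + 1) n).map e.toEmbedding, f (Fin.cons p.1 p.2) := by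
        simp [e]
    _ = _ := sum_finset_product' _ _ _ (f := fun a y => f (Fin.cons a y)) fun p => by
        simp [e, mem_antidiagonalTuple, Fin.sum_univ_succ]
        omega

theorem sum_antidiagonalTuple_filter_ne_zero (k n : ℕ) (i : Fin k) (f : (Fin k → ℕ) → M) :
    ∑ x ∈ antidiagonalTuple k (n + 1) with x i ≠ 0, f x =
      ∑ y ∈ antidiagonalTuple k n, f (y + Pi.single i 1) := by
  have hsum (y : Fin k → ℕ) : ∑ l, (y + Pi.single i 1 : Fin k → ℕ) l = ∑ l, y l + 1 := by
    simp [sum_add_distrib]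
  have hcancel {x : Fin k → ℕ} (hx : x i ≠ 0) : x - Pi.single i 1 + Pi.single i 1 = x :=
    tsub_add_cancel_of_le fun l => by
      rcases eq_or_ne l i with rfl | hl <;> simp [*]; omega
  symm
  refine sum_nbij' (· + Pi.single i 1) (· - Pi.single i 1) (fun y hy => ?_) (fun x hx => ?_)
    (fun y _ => add_tsub_cancel_right y _) (fun x hx => hcancel (mem_filter.1 hx).2) fun _ _ => rfl
  · simp_all [mem_antidiagonalTuple]
  · simp only [mem_filter, mem_antidiagonalTuple] at hx ⊢
    have := hsum (x - Pi.single i 1)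
    rw [hcancel hx.2] at this
    omega

end Finset.Nat

open Finset.Nat

section Weights

variable {J : ℕ} (η0 : ℝ) (η : Fin J → ℝ) (ν : Fin J → ℕ → ℝ) (x : ℝ)

noncomputable def stbWeight (m : Fin J → ℕ) : ℝ :=
  ∏ j, ∏ i ∈ range (m j), η j / ν j (i + 1)

noncomputable def lostWeight (n : Fin (J + 1) → ℕ) : ℝ :=
  (η0 / x) ^ n 0 * stbWeight η ν (Fin.tail n)

theorem stbWeight_add_single (m : Fin J → ℕ) (j : Fin J) :
    stbWeight η ν (m + Pi.single j 1) = η j / ν j (m j + 1) * stbWeight η ν m := by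
  have hfactor (k : Fin J) : ∏ i ∈ range ((m + Pi.single j 1 : Fin J → ℕ) k), η k / ν k (i + 1) =
      (if k = j then η j / ν j (m j + 1) else 1) * ∏ i ∈ range (m k), η k / ν k (i + 1) := by
    rcases eq_or_ne k j with rfl | hk
    · rw [Pi.add_apply, Pi.single_eq_same, prod_range_succ, if_pos rfl, mul_comm]
    · rw [Pi.add_apply, Pi.single_eq_of_ne hk, add_zero, if_neg hk, one_mul]
  simp only [stbWeight, hfactor, prod_mul_distrib, prod_ite_eq', mem_univ, if_true]

theorem lostWeight_add_single_succ (n : Fin (J + 1) → ℕ) (j : Fin J) :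
    lostWeight η0 η ν x (n + Pi.single j.succ 1) =
      η j / ν j (n j.succ + 1) * lostWeight η0 η ν x n := by
  have htail : Fin.tail (n + Pi.single j.succ 1) = Fin.tail n + Pi.single j 1 := by
    ext k
    simp [Fin.tail, Pi.single_apply]
  simp only [lostWeight, htail, stbWeight_add_single, Pi.add_apply,
    Pi.single_eq_of_ne (Fin.succ_ne_zero j).symm, add_zero]
  exact mul_left_comm _ _ _

theorem sum_lostWeight_eq_Cx (M : ℕ) :
    ∑ n ∈ antidiagonalTuple (J + 1) M, lostWeight η0 η ν x n = Cx J η0 η ν x M := by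
  simp only [sum_antidiagonalTuple_succ, Cx, Cstb, mul_sum]
  rfl

end Weights

section Normalisation

variable {J : ℕ} {η0 : ℝ} {η : Fin J → ℝ} {ν : Fin J → ℕ → ℝ} {x : ℝ}

theorem Cstb_zero : Cstb J η ν 0 = 1 := by
  simp [Cstb, antidiagonalTuple_zero_right]

theorem Cstb_nonneg (hη : ∀ j, 0 ≤ η j) (hν : ∀ j i, 1 ≤ i → 0 ≤ ν j i) (m : ℕ) :
    0 ≤ Cstb J η ν m :=
  sum_nonneg fun _ _ => prod_nonneg fun j _ => prod_nonneg fun i _ =>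
    div_nonneg (hη j) (hν j (i + 1) le_add_self)

theorem Cx_pos (ha : 0 < η0 / x) (hη : ∀ j, 0 ≤ η j) (hν : ∀ j i, 1 ≤ i → 0 ≤ ν j i) (L : ℕ) :
    0 < Cx J η0 η ν x L := by
  refine sum_pos' (fun n _ => mul_nonneg (pow_nonneg ha.le n) (Cstb_nonneg hη hν _))
    ⟨L, self_mem_range_succ L, ?_⟩
  rw [Nat.sub_self, Cstb_zero, mul_one]
  exact pow_pos ha L

theorem Cx_succ (M : ℕ) :
    Cx J η0 η ν x (M + 1) = Cstb J η ν (M + 1) + η0 / x * Cx J η0 η ν x M := by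
  rw [Cx, Cx, sum_range_succ', mul_sum, add_comm]
  simp [pow_succ', mul_assoc]

theorem lamEff_succ_eq {M : ℕ} (hx : x ≠ 0) (hC : Cx J η0 η ν x (M + 1) ≠ 0) :
    lamEff J (M + 1) η0 η ν x = η0 * Cx J η0 η ν x M / Cx J η0 η ν x (M + 1) := by
  have hstb : Cstb J η ν (M + 1) = Cx J η0 η ν x (M + 1) - η0 / x * Cx J η0 η ν x M := by
    rw [Cx_succ]; ring
  change x * (1 - Cstb J η ν (M + 1) / Cx J η0 η ν x (M + 1)) = _
  rw [hstb]
  field_simp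
  ring

end Normalisation

theorem idle_probability_lost_customers_general
    (J N : ℕ) (hN : 1 ≤ N)
    (η0 : ℝ) (hη0 : 0 < η0)
    (η : Fin J → ℝ) (hη : ∀ j, 0 < η j)
    (ν : Fin J → ℕ → ℝ) (hν : ∀ j i, 1 ≤ i → 0 < ν j i)
    (x : ℝ) (hx : 0 < x)
    (j : Fin J) (c : ℝ) (hconst : ∀ i, 1 ≤ i → ν j i = c)
    (w : (Fin (J + 1) → ℕ) → ℝ)
    (hw : ∀ n, w n = (η0 / x) ^ n 0 *
        ∏ k : Fin J, ∏ i ∈ Finset.range (n k.succ), η k / ν k (i + 1))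
    (CS : ℝ) (hCS : CS = ∑ n ∈ Finset.Nat.antidiagonalTuple (J + 1) N, w n) :
    (∑ n ∈ (Finset.Nat.antidiagonalTuple (J + 1) N).filter (fun n => n j.succ = 0),
        w n / CS)
      = 1 - (η j / c) * Cx J η0 η ν x (N - 1) / Cx J η0 η ν x N ∧
    (∑ n ∈ (Finset.Nat.antidiagonalTuple (J + 1) N).filter (fun n => n j.succ = 0),
        w n / CS)
      = 1 - lamEff J N η0 η ν x * η j / (η0 * c) ∧
    ∀ lamBO : ℝ, lamEff J N η0 η ν x = lamBO →
      (∑ n ∈ (Finset.Nat.antidiagonalTuple (J + 1) N).filter (fun n => n j.succ = 0),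
          w n / CS)
        = 1 - lamBO * η j / (η0 * c) := by
  obtain ⟨M, rfl⟩ := Nat.exists_eq_add_of_le' hN
  obtain rfl : w = lostWeight η0 η ν x := funext hw
  have hC : 0 < Cx J η0 η ν x (M + 1) :=
    Cx_pos (div_pos hη0 hx) (fun k => (hη k).le) (fun k i hi => (hν k i hi).le) _
  have hbusy :
      ∑ n ∈ antidiagonalTuple (J + 1) (M + 1) with n j.succ ≠ 0, lostWeight η0 η ν x n =
        η j / c * Cx J η0 η ν x M := by
    rw [sum_antidiagonalTuple_filter_ne_zero, ← sum_lostWeight_eq_Cx, mul_sum]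
    refine sum_congr rfl fun n _ => ?_
    rw [lostWeight_add_single_succ, hconst _ le_add_self]
  have hidle :
      ∑ n ∈ antidiagonalTuple (J + 1) (M + 1) with n j.succ = 0, lostWeight η0 η ν x n =
        Cx J η0 η ν x (M + 1) - η j / c * Cx J η0 η ν x M := by
    rw [← hbusy, ← sum_lostWeight_eq_Cx]
    exact eq_sub_of_add_eq (sum_filter_add_sum_filter_not _ _ _)
  have hprob :
      ∑ n ∈ antidiagonalTuple (J + 1) (M + 1) with n j.succ = 0, lostWeight η0 η ν x n / CS =
        1 - η j / c * Cx J η0 η ν x M / Cx J η0 η ν x (M + 1) := by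
    rw [← sum_div, hidle, hCS, sum_lostWeight_eq_Cx, sub_div, div_self hC.ne', mul_div_assoc]
  have hlam : 1 - lamEff J (M + 1) η0 η ν x * η j / (η0 * c) =
      1 - η j / c * Cx J η0 η ν x M / Cx J η0 η ν x (M + 1) := by
    rw [lamEff_succ_eq hx.ne' hC.ne']
    field_simp
  rw [Nat.add_sub_cancel]
  exact ⟨hprob, hprob.trans hlam.symm, fun lamBO h => h ▸ hprob.trans hlam.symm⟩

/-- In the SOQN with lost customers and arrival rate `x`, for a node `j` with constant
service rate `ν_j = c`, the steady-state probability that node `j` is empty equals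
`1 − (η_j/c)·C_x(N−1)/C_x(N) = 1 − λ_eff(x)·η_j/(η₀·c)`; in particular, if `x` is adjusted
so that `λ_eff(x) = λ_BO`, it equals `1 − λ_BO·η_j/(η₀·c)`, the idle probability of node `j`
in the SOQN with backordering. The state space is
`S = {(n₀,…,n_J) : n₀+⋯+n_J = N}` with weights `w(n)` and `π(n) = w(n)/∑_{n∈S} w(n)`. -/
theorem idle_probability_lost_customers
    (J N : ℕ) (hJ : 1 ≤ J) (hN : 1 ≤ N)
    (η0 : ℝ) (hη0 : 0 < η0)
    (η : Fin J → ℝ) (hη : ∀ j, 0 < η j)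
    (ν : Fin J → ℕ → ℝ) (hν : ∀ j i, 1 ≤ i → 0 < ν j i)
    (x : ℝ) (hx : 0 < x)
    (j : Fin J) (c : ℝ) (hc : 0 < c) (hconst : ∀ i, 1 ≤ i → ν j i = c)
    (w : (Fin (J + 1) → ℕ) → ℝ)
    (hw : ∀ n, w n = (η0 / x) ^ n 0 *
        ∏ k : Fin J, ∏ i ∈ Finset.range (n k.succ), η k / ν k (i + 1))
    (CS : ℝ) (hCS : CS = ∑ n ∈ Finset.Nat.antidiagonalTuple (J + 1) N, w n) :
    (∑ n ∈ (Finset.Nat.antidiagonalTuple (J + 1) N).filter (fun n => n j.succ = 0),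
        w n / CS)
      = 1 - (η j / c) * Cx J η0 η ν x (N - 1) / Cx J η0 η ν x N ∧
    (∑ n ∈ (Finset.Nat.antidiagonalTuple (J + 1) N).filter (fun n => n j.succ = 0),
        w n / CS)
      = 1 - lamEff J N η0 η ν x * η j / (η0 * c) ∧
    ∀ lamBO : ℝ, lamEff J N η0 η ν x = lamBO →
      (∑ n ∈ (Finset.Nat.antidiagonalTuple (J + 1) N).filter (fun n => n j.succ = 0),
          w n / CS)
        = 1 - lamBO * η j / (η0 * c) :=
  idle_probability_lost_customers_general J N hN η0 hη0 η hη ν hν x hx j c hconst w hw CS hCS
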